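/- arXiv:2202.05680 — 5 statements merged into one kernel-verified Lean document; each statement's English description precedes it below -/
import Mathlib

section
/- Let V be a finite-dimensional real vector space and 𝕍 = V ⊕ V* with the split-signature pairing ⟨v+α, w+β⟩ = β(v) + α(w). Let W ⊆ V be a subspace and Ω a 2-form (alternating bilinear form) on W. Then the subspace L(W,Ω) = { v + ι_v Ω̃ + α : v ∈ W, α ∈ Ann(W) }, where Ω̃ is any alternating extension of Ω to V, is a maximally isotropic (Lagrangian) subspace of 𝕍 with respect to ⟨·,·⟩, and is independent of the choice of extension Ω̃. -/
/-!
STATEMENT 0: `L(W,Ω) = { v + ι_v Ω̃ + α : v ∈ W, α ∈ Ann(W) }` is a Lagrangian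
subspace of `𝕍 = V ⊕ V*` and is independent of the choice of alternating
extension `Ω̃` of `Ω`.
-/

variable {V : Type*} [AddCommGroup V] [Module ℝ V] [FiniteDimensional ℝ V]

/-- The split-signature pairing `⟨v+α, w+β⟩ = β(v) + α(w)` on `𝕍 = V ⊕ V*`. -/
def pairV (x y : V × Module.Dual ℝ V) : ℝ := y.2 x.1 + x.2 y.1

/-- The subspace `L(W, Ω̃) = { v + ι_v Ω̃ + α : v ∈ W, α ∈ Ann(W) }`, where `Ω̃` is
regarded as a linear map `V →ₗ V*` via `v ↦ ι_v Ω̃` and `Ann(W)` is the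
dual annihilator of `W`. -/
def LWOmega (W : Submodule ℝ V) (Ω : V →ₗ[ℝ] Module.Dual ℝ V) :
    Submodule ℝ (V × Module.Dual ℝ V) where
  carrier := {x | x.1 ∈ W ∧ x.2 - Ω x.1 ∈ W.dualAnnihilator}
  add_mem' := by
    rintro a b ⟨ha1, ha2⟩ ⟨hb1, hb2⟩
    refine ⟨W.add_mem ha1 hb1, ?_⟩
    have h : (a + b).2 - Ω (a + b).1 = (a.2 - Ω a.1) + (b.2 - Ω b.1) := by
      simp only [Prod.fst_add, Prod.snd_add, map_add]
      abel
    rw [h]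
    exact Submodule.add_mem _ ha2 hb2
  zero_mem' := by
    refine ⟨W.zero_mem, ?_⟩
    simp
  smul_mem' := by
    rintro c a ⟨ha1, ha2⟩
    refine ⟨W.smul_mem c ha1, ?_⟩
    have h : (c • a).2 - Ω (c • a).1 = c • (a.2 - Ω a.1) := by
      simp only [Prod.smul_fst, Prod.smul_snd, map_smul, smul_sub]
    rw [h]
    exact Submodule.smul_mem _ c ha2

/-- `L(W,Ω̃)` is maximally isotropic (Lagrangian) for the split pairing, and does
not depend on the choice of alternating extension `Ω̃` of `Ω = Ω̃|_W`. -/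
theorem LWOmega_lagrangian_and_extension_independent
    (W : Submodule ℝ V) (Ω Ω' : V →ₗ[ℝ] Module.Dual ℝ V)
    (hΩ : ∀ v, Ω v v = 0) (hΩ' : ∀ v, Ω' v v = 0)
    (hagree : ∀ v ∈ W, ∀ w ∈ W, Ω' v w = Ω v w) :
    (∀ x ∈ LWOmega W Ω, ∀ y ∈ LWOmega W Ω, pairV x y = 0) ∧
    Module.finrank ℝ (LWOmega W Ω) = Module.finrank ℝ V ∧
    LWOmega W Ω' = LWOmega W Ω := by
  have skew : ∀ (v w : V), Ω v w + Ω w v = 0 := by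
    intro v w
    have h := hΩ (v + w)
    simp only [map_add, LinearMap.add_apply] at h
    rw [hΩ v, hΩ w] at h
    linarith
  refine ⟨?_, ?_, ?_⟩
  · rintro x ⟨hx1, hx2⟩ y ⟨hy1, hy2⟩
    rw [Submodule.mem_dualAnnihilator] at hx2 hy2
    have h1 := hx2 y.1 hy1
    have h2 := hy2 x.1 hx1
    have h3 := skew x.1 y.1
    simp only [LinearMap.sub_apply] at h1 h2
    unfold pairV
    linarith
  · let f : (W × W.dualAnnihilator) →ₗ[ℝ] (V × Module.Dual ℝ V) :=
      { toFun := fun p => (p.1.1, Ω p.1.1 + p.2.1)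
        map_add' := by
          rintro ⟨a, b⟩ ⟨c, d⟩
          simp only [Submodule.coe_add, map_add, Prod.mk_add_mk, Prod.mk.injEq]
          exact ⟨trivial, by abel⟩
        map_smul' := by
          rintro r ⟨a, b⟩
          simp only [Submodule.coe_smul, map_smul, RingHom.id_apply, Prod.smul_mk,
            smul_add] }
    have hrange : LinearMap.range f = LWOmega W Ω := by
      ext x
      simp only [LinearMap.mem_range]
      constructor
      · rintro ⟨⟨⟨w, hw⟩, ⟨α, hα⟩⟩, rfl⟩
        refine ⟨hw, ?_⟩
        simp only [f, LinearMap.coe_mk, AddHom.coe_mk, add_sub_cancel_left]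
        exact hα
      · rintro ⟨h1, h2⟩
        exact ⟨⟨⟨x.1, h1⟩, ⟨x.2 - Ω x.1, h2⟩⟩, by simp [f]⟩
    have hinj : Function.Injective f := by
      rintro ⟨⟨a, ha⟩, ⟨b, hb⟩⟩ ⟨⟨c, hc⟩, ⟨d, hd⟩⟩ h
      simp only [f, LinearMap.coe_mk, AddHom.coe_mk, Prod.mk.injEq] at h
      obtain ⟨h1, h2⟩ := h
      have h3 : b = d := by
        have : Ω a = Ω c := by rw [h1]
        rw [this] at h2
        exact add_left_cancel h2
      simp only [Prod.mk.injEq, Subtype.mk.injEq]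
      exact ⟨h1, h3⟩
    have e1 : Module.finrank ℝ (LWOmega W Ω) = Module.finrank ℝ (W × W.dualAnnihilator) := by
      rw [← hrange, LinearMap.finrank_range_of_inj hinj]
    have h4 : Module.finrank ℝ (V ⧸ W) = Module.finrank ℝ W.dualAnnihilator :=
      (Subspace.quotEquivAnnihilator W).finrank_eq
    have h5 := Submodule.finrank_quotient_add_finrank W
    haveI : Module.Free ℝ W.dualAnnihilator :=
      Module.Free.of_basis (Module.Basis.ofVectorSpace ℝ W.dualAnnihilator)
    haveI : Module.Free ℝ W := Module.Free.of_basis (Module.Basis.ofVectorSpace ℝ W)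
    rw [e1, Module.finrank_prod]
    omega
  · have key : ∀ v ∈ W, (Ω' v - Ω v : Module.Dual ℝ V) ∈ W.dualAnnihilator := by
      intro v hv
      rw [Submodule.mem_dualAnnihilator]
      intro w hw
      simp [LinearMap.sub_apply, hagree v hv w hw]
    ext x
    constructor
    · rintro ⟨h1, h2⟩
      refine ⟨h1, ?_⟩
      have : x.2 - Ω x.1 = (x.2 - Ω' x.1) + (Ω' x.1 - Ω x.1) := by abel
      rw [this]
      exact Submodule.add_mem _ h2 (key x.1 h1)
    · rintro ⟨h1, h2⟩
      refine ⟨h1, ?_⟩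
      have : x.2 - Ω' x.1 = (x.2 - Ω x.1) - (Ω' x.1 - Ω x.1) := by abel
      rw [this]
      exact Submodule.sub_mem _ h2 (key x.1 h1)
end

section
/- Let V be a finite-dimensional real vector space and 𝕍 = V ⊕ V* with the split-signature pairing ⟨v+α, w+β⟩ = β(v) + α(w). If L ⊆ 𝕍 is a Lagrangian subspace, define W = pr_V(L) and the bilinear form Ω on W by Ω(v,w) = α(w) for any α with v+α ∈ L (this is well-defined and alternating). Then L = L(W, Ω) = { v + ι_v Ω̃ + α : v ∈ W, α ∈ Ann(W) } for any alternating extension Ω̃ of Ω to V. -/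
/-!
STATEMENT 1: Every Lagrangian subspace `L ⊆ 𝕍 = V ⊕ V*` is of the form
`L(W, Ω)` with `W = pr_V(L)` and `Ω(v,w) = α(w)` for `v + α ∈ L`.
-/

variable {V : Type*} [AddCommGroup V] [Module ℝ V] [FiniteDimensional ℝ V]

/-- shear equivalence (v, α) ↦ (v, α + Ω v) -/
noncomputable def shear (Ω : V →ₗ[ℝ] Module.Dual ℝ V) :
    (V × Module.Dual ℝ V) ≃ₗ[ℝ] (V × Module.Dual ℝ V) where
  toFun p := (p.1, p.2 + Ω p.1)
  invFun p := (p.1, p.2 - Ω p.1)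
  map_add' a b := by ext <;> simp <;> abel
  map_smul' c a := by ext <;> simp
  left_inv p := by ext <;> simp
  right_inv p := by ext <;> simp

lemma prod_finrank (p : Submodule ℝ V) (q : Submodule ℝ (Module.Dual ℝ V)) :
    Module.finrank ℝ (p.prod q) = Module.finrank ℝ p + Module.finrank ℝ q := by
  have e : (p.prod q : Submodule ℝ (V × Module.Dual ℝ V)) ≃ₗ[ℝ] p × q :=
    { toFun := fun x => (⟨x.1.1, x.2.1⟩, ⟨x.1.2, x.2.2⟩)
      invFun := fun x => ⟨(x.1.1, x.2.1), x.1.2, x.2.2⟩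
      map_add' := fun a b => rfl
      map_smul' := fun c a => rfl
      left_inv := fun x => rfl
      right_inv := fun x => rfl }
  haveI : Module.Free ℝ q := Module.Free.of_divisionRing ℝ q
  haveI : Module.Free ℝ p := Module.Free.of_divisionRing ℝ p
  exact e.finrank_eq.trans Module.finrank_prod

lemma ann_finrank (W : Submodule ℝ V) :
    Module.finrank ℝ W + Module.finrank ℝ W.dualAnnihilator = Module.finrank ℝ V := by
  have h1 : Module.finrank ℝ (V ⧸ W) = Module.finrank ℝ W.dualAnnihilator :=
    (Subspace.quotEquivAnnihilator W).finrank_eq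
  have h2 := Submodule.finrank_quotient_add_finrank W
  omega

/-- If `L` is Lagrangian (isotropic of dimension `d = dim V`), `W = pr_V(L)`, and
`Ω̃` is any alternating form on `V` with `Ω̃(v, w) = α(w)` for all `v+α, w+β ∈ L`
(i.e. an alternating extension of the induced 2-form `Ω` on `W`), then
`L = L(W, Ω̃)`. -/
theorem lagrangian_eq_LWOmega
    (L : Submodule ℝ (V × Module.Dual ℝ V))
    (hiso : ∀ x ∈ L, ∀ y ∈ L, pairV x y = 0)
    (hrank : Module.finrank ℝ L = Module.finrank ℝ V)
    (Ω : V →ₗ[ℝ] Module.Dual ℝ V) (hΩ : ∀ v, Ω v v = 0)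
    (hext : ∀ x ∈ L, ∀ y ∈ L, Ω x.1 y.1 = x.2 y.1) :
    L = LWOmega (L.map (LinearMap.fst ℝ V (Module.Dual ℝ V))) Ω := by
  set W := L.map (LinearMap.fst ℝ V (Module.Dual ℝ V)) with hW
  have hle : L ≤ LWOmega W Ω := by
    intro x hx
    refine ⟨⟨x, hx, rfl⟩, ?_⟩
    rw [Submodule.mem_dualAnnihilator]
    rintro w ⟨y, hy, rfl⟩
    have := hext x hx y hy
    simp only [LinearMap.sub_apply, LinearMap.fst_apply]
    rw [← this]
    ring
  have hmap : LWOmega W Ω =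
      (W.prod W.dualAnnihilator).map (shear Ω).toLinearMap := by
    ext p
    constructor
    · rintro ⟨h1, h2⟩
      exact ⟨(p.1, p.2 - Ω p.1), ⟨h1, h2⟩, by ext <;> simp [shear]⟩
    · rintro ⟨q, ⟨h1, h2⟩, rfl⟩
      refine ⟨h1, ?_⟩
      simpa [shear] using h2
  have hfr : Module.finrank ℝ (LWOmega W Ω) = Module.finrank ℝ V := by
    rw [hmap, LinearEquiv.finrank_map_eq, prod_finrank, ann_finrank]
  exact (Submodule.eq_of_le_of_finrank_eq hle (by rw [hrank, hfr])).symm ▸ rfl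
end

section
/- Let (𝕍, K, η) be a para-Hermitian vector space with fundamental 2-form ω(x,y) = η(Kx,y), and let B₊ : L₊ → L₋ be skew with respect to η, with induced 2-form b₊ on 𝕍 defined by b₊(x,y) = η(B₊(p₊x), p₊y) where p₊ is projection onto L₊. Then the fundamental 2-form of the pulled-back para-Hermitian structure (K_{B₊}, η), namely ω_{B₊}(x,y) = η(K_{B₊}x, y), satisfies ω_{B₊} = ω - 2 b₊. -/
/-!
STATEMENT 11: The fundamental 2-form of the pulled-back para-Hermitian
structure `(K_{B₊}, η)` satisfies `ω_{B₊} = ω - 2 b₊`, where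
`b₊(x,y) = η(B₊(p₊ x), p₊ y)` and `p₊ = ½(1 + K)` is the projection onto `L₊`.
-/

variable {𝕍 : Type*} [AddCommGroup 𝕍] [Module ℝ 𝕍] [FiniteDimensional ℝ 𝕍]

/-- `K_{B₊} = e^{-B₊} ∘ K ∘ e^{B₊}`, with `e^{±B₊} = 1 ± B`. -/
def KB (K B : 𝕍 →ₗ[ℝ] 𝕍) : 𝕍 →ₗ[ℝ] 𝕍 :=
  (LinearMap.id - B) ∘ₗ K ∘ₗ (LinearMap.id + B)

theorem omega_KB_eq_omega_sub_two_bplus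
    (d : ℕ) (K : 𝕍 →ₗ[ℝ] 𝕍) (η : 𝕍 →ₗ[ℝ] 𝕍 →ₗ[ℝ] ℝ)
    (hK2 : K ∘ₗ K = LinearMap.id)
    (hKne1 : K ≠ LinearMap.id) (hKne2 : K ≠ -LinearMap.id)
    (hdim : Module.finrank ℝ 𝕍 = 2 * d)
    (hplus : Module.finrank ℝ (LinearMap.ker (K - LinearMap.id)) = d)
    (hminus : Module.finrank ℝ (LinearMap.ker (K + LinearMap.id)) = d)
    (hsymm : ∀ x y, η x y = η y x)
    (hnd : ∀ x, (∀ y, η x y = 0) → x = 0)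
    (hcompat : ∀ x y, η (K x) (K y) = - η x y)
    (B : 𝕍 →ₗ[ℝ] 𝕍)
    (hBrange : ∀ x, B x ∈ LinearMap.ker (K + LinearMap.id))
    (hBzero : ∀ x ∈ LinearMap.ker (K + LinearMap.id), B x = 0)
    (hskew : ∀ u ∈ LinearMap.ker (K - LinearMap.id),
      ∀ v ∈ LinearMap.ker (K - LinearMap.id), η (B u) v = - η u (B v)) :
    ∀ x y, η (KB K B x) y =
      η (K x) y - 2 * η (B ((2⁻¹ : ℝ) • (x + K x))) ((2⁻¹ : ℝ) • (y + K y)) := by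
  intro x y
  -- K (B z) = -(B z)
  have hKB : ∀ z, K (B z) = -(B z) := by
    intro z
    have h := hBrange z
    simp only [LinearMap.mem_ker, LinearMap.add_apply, LinearMap.id_apply] at h
    exact eq_neg_of_add_eq_zero_left h
  -- η vanishes on L₋
  have hmm : ∀ w v : 𝕍, K w = -w → K v = -v → η w v = 0 := by
    intro w v hw hv
    have h := hcompat w v
    rw [hw, hv] at h
    simp only [map_neg, LinearMap.neg_apply, neg_neg] at h
    linarith
  -- B (B z) = 0
  have hBB : ∀ z, B (B z) = 0 := fun z => hBzero (B z) (hBrange z)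
  -- compute KB
  have hKBx : KB K B x = K x - B x - B (K x) := by
    simp only [KB, LinearMap.comp_apply, LinearMap.sub_apply, LinearMap.add_apply,
      LinearMap.id_apply, map_add, hKB, map_neg, hBB]
    abel
  -- w := B x + B (K x) ∈ L₋
  have hw : K (B x + B (K x)) = -(B x + B (K x)) := by
    rw [map_add, hKB, hKB]; abel
  -- ½(y - K y) ∈ L₋
  have hy : K ((2⁻¹ : ℝ) • (y - K y)) = -((2⁻¹ : ℝ) • (y - K y)) := by
    rw [map_smul, map_sub, ← LinearMap.comp_apply, hK2, LinearMap.id_apply, ← smul_neg]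
    congr 1; abel
  have key := hmm _ _ hw hy
  rw [hKBx]
  have hBsmul : B ((2⁻¹ : ℝ) • (x + K x)) = (2⁻¹ : ℝ) • (B x + B (K x)) := by
    rw [map_smul, map_add]
  rw [hBsmul]
  simp only [map_sub, map_add, map_smul, LinearMap.sub_apply, LinearMap.add_apply,
    LinearMap.smul_apply, smul_eq_mul] at key ⊢
  ring_nf
  ring_nf at key
  linarith
end

section
/- Let M be a smooth manifold and consider the generalised tangent bundle 𝕋M = TM ⊕ T*M with pairing η(X+α, Y+β) = β(X) + α(Y), anchor pr_{TM}, and for a 3-form H on M the twisted Dorfman bracket [[X+α, Y+β]]_H = [X,Y] + L_X β - ι_Y dα + ι_Y ι_X H. Then this bracket satisfies the Jacobi identity [[e₁,[[e₂,e₃]]_H]]_H = [[[[e₁,e₂]]_H, e₃]]_H + [[e₂, [[e₁,e₃]]_H]]_H for all sections if and only if dH = 0. -/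
/-!
STATEMENT 15: The `H`-twisted Dorfman bracket
`[[X+α, Y+β]]_H = [X,Y] + L_X β - ι_Y dα + ι_Y ι_X H`
on `𝕋M = TM ⊕ T*M` satisfies the Jacobi identity for all sections if and
only if `dH = 0`.

We use the algebraic (Chevalley–Eilenberg) model of a smooth manifold `M`:
`R` plays the role of `C^∞(M)`, `Derivation ℝ R R` that of vector fields on
`M`, and 1-forms are (`R`-linear) functionals on vector fields.  Lie
derivative, interior product and exterior derivative are given by the usual
Cartan formulas.
-/

variable {R : Type*} [CommRing R] [Algebra ℝ R]

/-- Sections `X + α` of the generalised tangent bundle `𝕋M = TM ⊕ T*M`. -/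
abbrev GSec (R : Type*) [CommRing R] [Algebra ℝ R] :=
  Derivation ℝ R R × (Derivation ℝ R R → R)

/-- The `H`-twisted Dorfman bracket
`[[X+α, Y+β]]_H = ([X,Y], L_X β - ι_Y dα + ι_Y ι_X H)`, where
`(L_X β)(Z) = X(β Z) - β [X,Z]`, `(ι_Y dα)(Z) = Y(α Z) - Z(α Y) - α [Y,Z]`
and `(ι_Y ι_X H)(Z) = H(X,Y,Z)`. -/
def dorfman (H : Derivation ℝ R R → Derivation ℝ R R → Derivation ℝ R R → R)
    (x y : GSec R) : GSec R :=
  (⁅x.1, y.1⁆,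
    fun Z => (x.1 (y.2 Z) - y.2 ⁅x.1, Z⁆)
      - (y.1 (x.2 Z) - Z (x.2 y.1) - x.2 ⁅y.1, Z⁆)
      + H x.1 y.1 Z)

/-- The exterior derivative of a 3-form, by the Cartan formula. -/
def dThree (H : Derivation ℝ R R → Derivation ℝ R R → Derivation ℝ R R → R)
    (X Y Z W : Derivation ℝ R R) : R :=
  X (H Y Z W) - Y (H X Z W) + Z (H X Y W) - W (H X Y Z)
    - H ⁅X, Y⁆ Z W + H ⁅X, Z⁆ Y W - H ⁅X, W⁆ Y Z
    - H ⁅Y, Z⁆ X W + H ⁅Y, W⁆ X Z - H ⁅Z, W⁆ X Y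

/-- The twisted Dorfman bracket satisfies the Jacobi identity for all
sections `X + α` of `𝕋M` iff `dH = 0`. -/
theorem dorfman_jacobi_iff_dH_eq_zero
    (H : Derivation ℝ R R → Derivation ℝ R R → Derivation ℝ R R → R)
    -- H is a 3-form: R-trilinear and alternating
    (hlin1 : ∀ (f : R) (X X' Y Z : Derivation ℝ R R),
      H (f • X + X') Y Z = f * H X Y Z + H X' Y Z)
    (hlin2 : ∀ (f : R) (X Y Y' Z : Derivation ℝ R R),
      H X (f • Y + Y') Z = f * H X Y Z + H X Y' Z)
    (hlin3 : ∀ (f : R) (X Y Z Z' : Derivation ℝ R R),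
      H X Y (f • Z + Z') = f * H X Y Z + H X Y Z')
    (halt1 : ∀ X Z, H X X Z = 0) (halt2 : ∀ X Y, H X Y Y = 0) :
    (∀ (X Y Z : Derivation ℝ R R) (α β γ : Derivation ℝ R R →ₗ[R] R),
        dorfman H (X, ⇑α) (dorfman H (Y, ⇑β) (Z, ⇑γ)) =
          dorfman H (dorfman H (X, ⇑α) (Y, ⇑β)) (Z, ⇑γ) +
            dorfman H (Y, ⇑β) (dorfman H (X, ⇑α) (Z, ⇑γ))) ↔
      (∀ X Y Z W, dThree H X Y Z W = 0) := by
  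
  have hadd1 : ∀ X X' Y Z, H (X + X') Y Z = H X Y Z + H X' Y Z := fun X X' Y Z => by
    simpa using hlin1 1 X X' Y Z
  have hadd2 : ∀ X Y Y' Z, H X (Y + Y') Z = H X Y Z + H X Y' Z := fun X Y Y' Z => by
    simpa using hlin2 1 X Y Y' Z
  have hadd3 : ∀ X Y Z Z', H X Y (Z + Z') = H X Y Z + H X Y Z' := fun X Y Z Z' => by
    simpa using hlin3 1 X Y Z Z'
  have hswap12 : ∀ X Y Z, H Y X Z = -H X Y Z := by
    intro X Y Z
    have h0 := halt1 (X + Y) Z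
    rw [hadd1, hadd2, hadd2, halt1, halt1] at h0
    linear_combination h0
  have hswap23 : ∀ X Y Z, H X Z Y = -H X Y Z := by
    intro X Y Z
    have h0 := halt2 X (Y + Z)
    rw [hadd2, hadd3, hadd3, halt2, halt2] at h0
    linear_combination h0
  have hcyc : ∀ X Y Z, H Z X Y = H X Y Z := by
    intro X Y Z
    rw [hswap12, hswap23]; ring
  -- the main pointwise identity: the Jacobi anomaly equals dThree
  have main : ∀ (X Y Z : Derivation ℝ R R) (α β γ : Derivation ℝ R R →ₗ[R] R)
      (W : Derivation ℝ R R),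
      (dorfman H (X, ⇑α) (dorfman H (Y, ⇑β) (Z, ⇑γ))).2 W =
        (dorfman H (dorfman H (X, ⇑α) (Y, ⇑β)) (Z, ⇑γ)).2 W +
          (dorfman H (Y, ⇑β) (dorfman H (X, ⇑α) (Z, ⇑γ))).2 W + dThree H X Y Z W := by
    intro X Y Z α β γ W
    simp only [dorfman, dThree, lie_lie, Derivation.commutator_apply, map_add, map_sub,
      hswap12 ⁅Y, Z⁆ X W, hcyc Y Z ⁅X, W⁆, hcyc X Y ⁅Z, W⁆, hswap12 ⁅X, Z⁆ Y W,
      hcyc X Z ⁅Y, W⁆]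
    ring
  constructor
  · intro h X Y Z W
    have e := congrArg (fun p => p.2 W)
      (h X Y Z 0 0 0)
    simp only [Prod.snd_add, Pi.add_apply] at e
    rw [main X Y Z 0 0 0 W] at e
    linear_combination e
  · intro h X Y Z α β γ
    refine Prod.ext ?_ (funext fun W => ?_)
    · show ⁅X, ⁅Y, Z⁆⁆ = _
      simp only [dorfman, Prod.fst_add]
      exact leibniz_lie X Y Z
    · rw [show ((dorfman H (dorfman H (X, ⇑α) (Y, ⇑β)) (Z, ⇑γ) +
          dorfman H (Y, ⇑β) (dorfman H (X, ⇑α) (Z, ⇑γ))).2) W =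
          (dorfman H (dorfman H (X, ⇑α) (Y, ⇑β)) (Z, ⇑γ)).2 W +
          (dorfman H (Y, ⇑β) (dorfman H (X, ⇑α) (Z, ⇑γ))).2 W from rfl,
        main X Y Z α β γ W, h X Y Z W, add_zero]
end

section
/- Let (𝕍, K, η) be a para-Hermitian vector space with eigenspace decomposition 𝕍 = L₊ ⊕ L₋ and projections p± : 𝕍 → L±. Let L ⊆ 𝕍 be a maximally isotropic subspace with respect to η and set W = p₊(L). Then there exists a linear map Ω̄ : W → L₋ with η(Ω̄(u), v) = -η(u, Ω̄(v)) for all u, v ∈ W (i.e. inducing an alternating form on W via η) such that L = { u + Ω̄(u) + w : u ∈ W, w ∈ W̄ }, where W̄ = η^♯(Ann(W)) ∩ L₋ is the subspace of L₋ pairing trivially with W under η. -/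
/-!
Split `𝕍 = L₊ ⊕ L₋` with the projection `p₊ = ½(1 + K)`. Since `K` is an anti-isometry of `η`,
both eigenspaces are isotropic, so `η` only pairs `L₊` with `L₋`. Being isotropic of half the
dimension, `L` equals its own orthogonal. Choosing a linear section `s : W → L` of
`p₊`, we get `Ω̄ = (1 - p₊) ∘ s`; skewness of `Ω̄` is the isotropy `η(s u, s v) = 0`, and the
remaining freedom in `L`, namely `L ∩ L₋`, consists of the vectors of `L₋` orthogonal to `L`,
i.e. of those orthogonal to `W`.
-/

theorem LinearMap.exists_section_submoduleMap {k V V' : Type*} [Field k] [AddCommGroup V]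
    [Module k V] [AddCommGroup V'] [Module k V'] (f : V →ₗ[k] V') (L : Submodule k V) :
    ∃ s : V' →ₗ[k] V, (∀ y, s y ∈ L) ∧ ∀ y ∈ L.map f, f (s y) = y := by
  obtain ⟨r, hr⟩ := (f.submoduleMap L).exists_rightInverse_of_surjective
    (LinearMap.range_eq_top.2 (f.submoduleMap_surjective L))
  obtain ⟨s, hs⟩ := LinearMap.exists_extend r
  refine ⟨L.subtype ∘ₗ s, fun y => (s y).2, fun y hy => ?_⟩
  have hsy : s y = r ⟨y, hy⟩ := LinearMap.congr_fun hs ⟨y, hy⟩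
  have hry := congrArg Subtype.val (LinearMap.congr_fun hr ⟨y, hy⟩)
  rw [LinearMap.comp_apply, f.submoduleMap_coe_apply] at hry
  simpa [hsy] using hry

theorem LinearMap.BilinForm.orthogonal_eq_self_of_le_orthogonal {k V : Type*} [Field k]
    [AddCommGroup V] [Module k V] [FiniteDimensional k V] {B : LinearMap.BilinForm k V}
    (hB : B.Nondegenerate) {L : Submodule k V} (hL : L ≤ B.orthogonal L)
    (hdim : 2 * Module.finrank k L = Module.finrank k V) :
    B.orthogonal L = L :=
  (Submodule.eq_of_le_of_finrank_le hL
    (by rw [LinearMap.BilinForm.finrank_orthogonal hB]; omega)).symm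

section Involution

variable {k V : Type*} [Field k] [AddCommGroup V] [Module k V]
  {K : V →ₗ[k] V}

def plusProj (K : V →ₗ[k] V) : V →ₗ[k] V := (2⁻¹ : k) • (LinearMap.id + K)

theorem plusProj_apply (x : V) : plusProj K x = (2⁻¹ : k) • (x + K x) := rfl

theorem plusProj_mem_ker_sub (hK : ∀ x, K (K x) = x) (x : V) :
    plusProj K x ∈ LinearMap.ker (K - LinearMap.id) := by
  simp only [LinearMap.mem_ker, LinearMap.sub_apply, LinearMap.id_apply, plusProj_apply,
    map_smul, map_add, hK]
  module

theorem sub_plusProj_mem_ker_add [CharZero k] (hK : ∀ x, K (K x) = x) (x : V) :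
    x - plusProj K x ∈ LinearMap.ker (K + LinearMap.id) := by
  simp only [LinearMap.mem_ker, LinearMap.add_apply, LinearMap.id_apply, plusProj_apply,
    map_sub, map_smul, map_add, hK]
  module

variable {η : LinearMap.BilinForm k V} (hη : ∀ x y, η (K x) (K y) = -η x y)
include hη

theorem apply_eq_zero_of_mem_ker_sub [CharZero k] {x y : V}
    (hx : x ∈ LinearMap.ker (K - LinearMap.id)) (hy : y ∈ LinearMap.ker (K - LinearMap.id)) :
    η x y = 0 := by
  rw [LinearMap.mem_ker, LinearMap.sub_apply, LinearMap.id_apply, sub_eq_zero] at hx hy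
  simpa [hx, hy, self_eq_neg] using hη x y

theorem apply_eq_zero_of_mem_ker_add [CharZero k] {x y : V}
    (hx : x ∈ LinearMap.ker (K + LinearMap.id)) (hy : y ∈ LinearMap.ker (K + LinearMap.id)) :
    η x y = 0 := by
  rw [LinearMap.mem_ker, LinearMap.add_apply, LinearMap.id_apply, add_eq_zero_iff_eq_neg] at hx hy
  simpa [hx, hy, self_eq_neg] using hη x y

theorem apply_add_add [CharZero k] {u v a b : V} (hu : u ∈ LinearMap.ker (K - LinearMap.id))
    (hv : v ∈ LinearMap.ker (K - LinearMap.id)) (ha : a ∈ LinearMap.ker (K + LinearMap.id))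
    (hb : b ∈ LinearMap.ker (K + LinearMap.id)) :
    η (u + a) (v + b) = η u b + η a v := by
  simp only [map_add, LinearMap.add_apply, apply_eq_zero_of_mem_ker_sub hη hu hv,
    apply_eq_zero_of_mem_ker_add hη ha hb]
  ring

theorem apply_plusProj_right [CharZero k] (hK : ∀ x, K (K x) = x) {w : V}
    (hw : w ∈ LinearMap.ker (K + LinearMap.id)) (y : V) :
    η w (plusProj K y) = η w y := by
  rw [← sub_eq_zero, ← map_sub, ← neg_sub, map_neg, neg_eq_zero]
  exact apply_eq_zero_of_mem_ker_add hη hw (sub_plusProj_mem_ker_add hK y)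

variable {L : Submodule k V} {s : V →ₗ[k] V} (hsL : ∀ y, s y ∈ L)
  (hps : ∀ y ∈ L.map (plusProj K), plusProj K (s y) = y)
include hsL hps

theorem apply_sub_plusProj_section_eq_neg [CharZero k] (hK : ∀ x, K (K x) = x)
    (hiso : ∀ x ∈ L, ∀ y ∈ L, η x y = 0) {u v : V} (hu : u ∈ L.map (plusProj K))
    (hv : v ∈ L.map (plusProj K)) :
    η (s u - plusProj K (s u)) v = -η u (s v - plusProj K (s v)) := by
  have hW : ∀ y, plusProj K (s y) ∈ LinearMap.ker (K - LinearMap.id) :=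
    fun y => plusProj_mem_ker_sub hK (s y)
  have hsplit := apply_add_add hη (hW u) (hW v) (sub_plusProj_mem_ker_add hK (s u))
    (sub_plusProj_mem_ker_add hK (s v))
  rw [add_sub_cancel, add_sub_cancel, hiso _ (hsL u) _ (hsL v), hps u hu, hps v hv] at hsplit
  rw [hps u hu, hps v hv]
  linear_combination -hsplit

theorem mem_iff_exists_section_add [CharZero k] (hK : ∀ x, K (K x) = x)
    (hsymm : ∀ x y, η x y = η y x) (hLperp : η.orthogonal L = L) (x : V) :
    x ∈ L ↔ ∃ u ∈ L.map (plusProj K), ∃ w ∈ LinearMap.ker (K + LinearMap.id),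
      (∀ u' ∈ L.map (plusProj K), η w u' = 0) ∧
        x = u + ((LinearMap.id - plusProj K) ∘ₗ s) u + w := by
  have hperp_iff : ∀ w ∈ LinearMap.ker (K + LinearMap.id),
      w ∈ L ↔ ∀ u' ∈ L.map (plusProj K), η w u' = 0 := by
    intro w hw
    conv_lhs => rw [← hLperp]
    simp only [LinearMap.BilinForm.mem_orthogonal_iff, Submodule.mem_map, forall_exists_index,
      and_imp, forall_apply_eq_imp_iff₂, apply_plusProj_right hη hK hw, hsymm _ w]
  constructor
  · intro hx
    have hu : plusProj K x ∈ L.map (plusProj K) := Submodule.mem_map_of_mem hx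
    have hw : x - s (plusProj K x) ∈ LinearMap.ker (K + LinearMap.id) := by
      have hdiff := sub_mem (sub_plusProj_mem_ker_add hK x)
        (sub_plusProj_mem_ker_add hK (s (plusProj K x)))
      rwa [hps _ hu, sub_sub_sub_cancel_right] at hdiff
    refine ⟨plusProj K x, hu, _, hw, (hperp_iff _ hw).1 (sub_mem hx (hsL _)), ?_⟩
    simp only [LinearMap.comp_apply, LinearMap.sub_apply, LinearMap.id_apply, hps _ hu]
    abel
  · rintro ⟨u, hu, w, hw, hwW, rfl⟩
    simp only [LinearMap.comp_apply, LinearMap.sub_apply, LinearMap.id_apply, hps u hu,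
      add_sub_cancel]
    exact add_mem (hsL u) ((hperp_iff w hw).2 hwW)

end Involution

variable {𝕍 : Type*} [AddCommGroup 𝕍] [Module ℝ 𝕍] [FiniteDimensional ℝ 𝕍]

theorem maximally_isotropic_structure_theorem_general
    (d : ℕ) (K : 𝕍 →ₗ[ℝ] 𝕍) (η : 𝕍 →ₗ[ℝ] 𝕍 →ₗ[ℝ] ℝ)
    (hK2 : K ∘ₗ K = LinearMap.id)
    (hdim : Module.finrank ℝ 𝕍 = 2 * d)
    (hsymm : ∀ x y, η x y = η y x)
    (hnd : ∀ x, (∀ y, η x y = 0) → x = 0)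
    (hcompat : ∀ x y, η (K x) (K y) = - η x y)
    -- a maximally isotropic subspace L
    (L : Submodule ℝ 𝕍)
    (hiso : ∀ x ∈ L, ∀ y ∈ L, η x y = 0)
    (hL : Module.finrank ℝ L = d) :
    -- with W = p₊(L) the image of L under the projection p₊ = ½(1 + K):
    ∃ Ωb : 𝕍 →ₗ[ℝ] 𝕍,
      -- Ω̄ takes values in L₋,
      (∀ x, Ωb x ∈ LinearMap.ker (K + LinearMap.id)) ∧
      -- Ω̄ is skew on W with respect to η (inducing an alternating form on W),
      (∀ u ∈ L.map ((2⁻¹ : ℝ) • (LinearMap.id + K)),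
        ∀ v ∈ L.map ((2⁻¹ : ℝ) • (LinearMap.id + K)),
          η (Ωb u) v = - η u (Ωb v)) ∧
      -- and L = { u + Ω̄(u) + w : u ∈ W, w ∈ W̄ }
      (∀ x : 𝕍, x ∈ L ↔
        ∃ u ∈ L.map ((2⁻¹ : ℝ) • (LinearMap.id + K)),
          ∃ w ∈ LinearMap.ker (K + LinearMap.id),
            (∀ u' ∈ L.map ((2⁻¹ : ℝ) • (LinearMap.id + K)), η w u' = 0) ∧
              x = u + Ωb u + w) := by
  have hK : ∀ x, K (K x) = x := LinearMap.congr_fun hK2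
  have hη : LinearMap.BilinForm.Nondegenerate η :=
    (LinearMap.IsRefl.nondegenerate_iff_separatingLeft fun x y h => hsymm x y ▸ h).2 hnd
  have hLperp : LinearMap.BilinForm.orthogonal η L = L :=
    LinearMap.BilinForm.orthogonal_eq_self_of_le_orthogonal hη
      (fun x hx y hy => hiso y hy x hx) (by omega)
  obtain ⟨s, hsL, hps⟩ := (plusProj K).exists_section_submoduleMap L
  exact ⟨(LinearMap.id - plusProj K) ∘ₗ s, fun x => sub_plusProj_mem_ker_add hK (s x),
    fun u hu v hv => apply_sub_plusProj_section_eq_neg hcompat hsL hps hK hiso hu hv,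
    mem_iff_exists_section_add hcompat hsL hps hK hsymm hLperp⟩

theorem maximally_isotropic_structure_theorem
    (d : ℕ) (K : 𝕍 →ₗ[ℝ] 𝕍) (η : 𝕍 →ₗ[ℝ] 𝕍 →ₗ[ℝ] ℝ)
    (hK2 : K ∘ₗ K = LinearMap.id)
    (hKne1 : K ≠ LinearMap.id) (hKne2 : K ≠ -LinearMap.id)
    (hdim : Module.finrank ℝ 𝕍 = 2 * d)
    (hplus : Module.finrank ℝ (LinearMap.ker (K - LinearMap.id)) = d)
    (hminus : Module.finrank ℝ (LinearMap.ker (K + LinearMap.id)) = d)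
    (hsymm : ∀ x y, η x y = η y x)
    (hnd : ∀ x, (∀ y, η x y = 0) → x = 0)
    (hcompat : ∀ x y, η (K x) (K y) = - η x y)
    -- a maximally isotropic subspace L
    (L : Submodule ℝ 𝕍)
    (hiso : ∀ x ∈ L, ∀ y ∈ L, η x y = 0)
    (hL : Module.finrank ℝ L = d) :
    -- with W = p₊(L) the image of L under the projection p₊ = ½(1 + K):
    ∃ Ωb : 𝕍 →ₗ[ℝ] 𝕍,
      -- Ω̄ takes values in L₋,
      (∀ x, Ωb x ∈ LinearMap.ker (K + LinearMap.id)) ∧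
      -- Ω̄ is skew on W with respect to η (inducing an alternating form on W),
      (∀ u ∈ L.map ((2⁻¹ : ℝ) • (LinearMap.id + K)),
        ∀ v ∈ L.map ((2⁻¹ : ℝ) • (LinearMap.id + K)),
          η (Ωb u) v = - η u (Ωb v)) ∧
      -- and L = { u + Ω̄(u) + w : u ∈ W, w ∈ W̄ }
      (∀ x : 𝕍, x ∈ L ↔
        ∃ u ∈ L.map ((2⁻¹ : ℝ) • (LinearMap.id + K)),
          ∃ w ∈ LinearMap.ker (K + LinearMap.id),
            (∀ u' ∈ L.map ((2⁻¹ : ℝ) • (LinearMap.id + K)), η w u' = 0) ∧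
              x = u + Ωb u + w) :=
  maximally_isotropic_structure_theorem_general d K η hK2 hdim hsymm hnd hcompat L hiso hL
end
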